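/- Let m ≥ 2, 0 ≤ β < 1, let k(z) = z + ∑_{n≥2} k_n z^n be bi-univalent with k₂ ≠ 0, k₃ ≠ 0 and 2k₃ − k₂² ≠ 0, and let f(z) = z + ∑_{n≥2} a_n z^n belong to the class S_m^k(β), i.e., BV^k(m; 0, β). Then |a₂| ≤ min{ √( m(1−β)/|2k₃ − k₂²| ) , m(1−β)/|k₂| }. -/

import Mathlib

/-!
Write `F = f ∗ k`, `G = g ∗ k` and `p = z F'/F ∈ P_m(β)`. Comparing coefficients in
`z F' = p F` gives `p₁ = F₂` and `p₂ = 2F₃ - F₂²`, and every coefficient `pₙ`, `n ≥ 1`, has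
modulus at most `m(1 - β)`, because those of the kernel `(1 - w)/(1 + w)` have modulus at most `2`.
With `F₂ = a₂k₂` this is the second bound. Since `f ∘ g = id` near `0`, `b₂ = -a₂` and
`b₃ = 2a₂² - a₃`, so adding the relations `p₂ = 2F₃ - F₂²` for `F` and `G` cancels `a₃` and leaves
`2a₂²(2k₃ - k₂²)`, of modulus at most `2m(1 - β)`: this is the first bound.
-/

open MeasureTheory Set Metric Complex

noncomputable section

/-- The `n`-th MacLaurin coefficient of `f`, i.e. `f⁽ⁿ⁾(0)/n!`. -/
def mc (f : ℂ → ℂ) (n : ℕ) : ℂ := iteratedDeriv n f 0 / (n.factorial : ℂ)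

/-- The open unit disk in `ℂ`. -/
def unitDisk : Set ℂ := Metric.ball (0 : ℂ) 1

/-- The kernel `(1 - z e^{it})/(1 + z e^{it})`. -/
def pmKernel (z : ℂ) (t : ℝ) : ℂ :=
  (1 - z * Complex.exp (t * Complex.I)) / (1 + z * Complex.exp (t * Complex.I))

/-- The class `P_m` of functions with bounded boundary rotation: `p` is analytic on the unit
disk, `p 0 = 1`, and `p` is represented against a finite signed Borel measure
`μ = μp - μn` on `[0, 2π]` with `μ([0,2π]) = 1` and total variation `‖μ‖ ≤ m/2`. -/
def MemPm (m : ℝ) (p : ℂ → ℂ) : Prop :=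
  AnalyticOnNhd ℂ p unitDisk ∧ p 0 = 1 ∧
  ∃ μp μn : Measure ℝ, IsFiniteMeasure μp ∧ IsFiniteMeasure μn ∧
    (μp (Set.Icc 0 (2 * Real.pi))).toReal - (μn (Set.Icc 0 (2 * Real.pi))).toReal = 1 ∧
    (μp (Set.Icc 0 (2 * Real.pi))).toReal + (μn (Set.Icc 0 (2 * Real.pi))).toReal ≤ m / 2 ∧
    ∀ z ∈ unitDisk, p z =
      (∫ t in Set.Icc 0 (2 * Real.pi), pmKernel z t ∂μp) -
      (∫ t in Set.Icc 0 (2 * Real.pi), pmKernel z t ∂μn)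

/-- `p ∈ P_m(β)` iff `p = β + (1 - β) q` on the unit disk for some `q ∈ P_m`. -/
def MemPmBeta (m β : ℝ) (p : ℂ → ℂ) : Prop :=
  ∃ q : ℂ → ℂ, MemPm m q ∧ ∀ z ∈ unitDisk, p z = (β : ℂ) + (1 - (β : ℂ)) * q z

/-- `f` and `g` form a bi-univalent pair: `f` is analytic and injective on the unit disk with
`f 0 = 0`, `f' 0 = 1`, and `g` is the univalent analytic continuation of `f⁻¹` to the unit
disk: `g` is analytic and injective on the unit disk, `g 0 = 0`, and `f (g w) = w` for
`|w| < 1/4`. -/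
def BiUnivalentPair (f g : ℂ → ℂ) : Prop :=
  AnalyticOnNhd ℂ f unitDisk ∧ f 0 = 0 ∧ deriv f 0 = 1 ∧ Set.InjOn f unitDisk ∧
  AnalyticOnNhd ℂ g unitDisk ∧ Set.InjOn g unitDisk ∧ g 0 = 0 ∧
  ∀ w : ℂ, ‖w‖ < 1 / 4 → f (g w) = w

/-- MacLaurin coefficients of the Hadamard convolution `f ∗ k`. -/
def hadCoeff (f k : ℂ → ℂ) (n : ℕ) : ℂ :=
  if n = 0 then 0 else if n = 1 then 1 else mc f n * mc k n

/-- The Hadamard convolution `F(z) = (f ∗ k)(z) = z + ∑_{n≥2} a_n k_n z^n`. -/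
def hadFun (f k : ℂ → ℂ) (z : ℂ) : ℂ := ∑' n : ℕ, hadCoeff f k n * z ^ n

/-- The expression `z F'(z)/F(z)`, extended by `1` at the origin. -/
def starOp (F : ℂ → ℂ) (z : ℂ) : ℂ := if z = 0 then 1 else z * deriv F z / F z

/-- `f ∈ S_m^k(β) = BV^k(m; 0, β)`: `f` is bi-univalent with inverse `g`, the convolutions
`F = f ∗ k` and `G = g ∗ k` converge on the unit disk, do not vanish on the punctured disk,
and both `z F'/F` and `w G'/G` belong to `P_m(β)`. -/
def MemS (m β : ℝ) (k f g : ℂ → ℂ) : Prop :=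
  BiUnivalentPair f g ∧
  (∀ z ∈ unitDisk, Summable fun n : ℕ => hadCoeff f k n * z ^ n) ∧
  (∀ w ∈ unitDisk, Summable fun n : ℕ => hadCoeff g k n * w ^ n) ∧
  (∀ z ∈ unitDisk, z ≠ 0 → hadFun f k z ≠ 0) ∧
  (∀ w ∈ unitDisk, w ≠ 0 → hadFun g k w ≠ 0) ∧
  MemPmBeta m β (starOp (hadFun f k)) ∧ MemPmBeta m β (starOp (hadFun g k))

open scoped Topology

lemma unitDisk_mem_nhds_zero : unitDisk ∈ 𝓝 (0 : ℂ) :=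
  ball_mem_nhds 0 one_pos

lemma mc_zero (f : ℂ → ℂ) : mc f 0 = f 0 := by
  simp [mc]

lemma mc_one (f : ℂ → ℂ) : mc f 1 = deriv f 0 := by
  simp [mc]

lemma Filter.EventuallyEq.mc_eq {f g : ℂ → ℂ} (h : f =ᶠ[𝓝 0] g) (n : ℕ) :
    mc f n = mc g n := by
  rw [mc, mc, h.iteratedDeriv_eq]

lemma hasFPowerSeriesAt_ofScalars_of_hasSum {f : ℂ → ℂ} {c : ℕ → ℂ}
    (h : ∀ᶠ z in 𝓝 0, HasSum (fun n => c n * z ^ n) (f z)) :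
    HasFPowerSeriesAt f (FormalMultilinearSeries.ofScalars ℂ c) 0 := by
  rw [hasFPowerSeriesAt_iff]
  simpa [FormalMultilinearSeries.coeff_ofScalars, mul_comm] using h

lemma mc_eq_of_hasSum {f : ℂ → ℂ} {c : ℕ → ℂ}
    (h : ∀ᶠ z in 𝓝 0, HasSum (fun n => c n * z ^ n) (f z)) : mc f = c := by
  have hc := hasFPowerSeriesAt_ofScalars_of_hasSum h
  exact FormalMultilinearSeries.ofScalars_series_injective ℂ ℂ
    (hc.analyticAt.hasFPowerSeriesAt.eq_formalMultilinearSeries hc)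

lemma mc_mul {f g : ℂ → ℂ} {n : ℕ} (hf : ContDiffAt ℂ n f 0) (hg : ContDiffAt ℂ n g 0) :
    mc (fun z => f z * g z) n = ∑ i ∈ Finset.range (n + 1), mc f i * mc g (n - i) := by
  rw [mc, iteratedDeriv_fun_mul hf hg, Finset.sum_div]
  refine Finset.sum_congr rfl fun i hi => ?_
  have hin : i ≤ n := Nat.lt_succ_iff.mp (Finset.mem_range.mp hi)
  have hfac : (n.choose i : ℂ) * i.factorial * (n - i).factorial = n.factorial := by
    exact_mod_cast Nat.choose_mul_factorial_mul_factorial hin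
  have hchoose : (n.choose i : ℂ) ≠ 0 := by exact_mod_cast (Nat.choose_pos hin).ne'
  rw [mc, mc, ← hfac, mul_assoc, mul_assoc, mul_div_mul_left _ _ hchoose, div_mul_div_comm]

lemma mc_deriv (F : ℂ → ℂ) (n : ℕ) : mc (deriv F) n = (n + 1) * mc F (n + 1) := by
  rw [mc, mc, ← iteratedDeriv_succ', Nat.factorial_succ]
  push_cast
  field_simp

lemma mc_id_mul_deriv {F : ℂ → ℂ} (hF : AnalyticAt ℂ F 0) (n : ℕ) :
    mc (fun z => z * deriv F z) n = n * mc F n := by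
  rcases n with _ | n
  · simp [mc_zero]
  rw [mc_mul (f := fun z => z) contDiffAt_id hF.deriv.contDiffAt, Finset.sum_eq_single 1]
  · rw [mc_one, deriv_id'', one_mul, Nat.add_sub_cancel, mc_deriv]
    push_cast
    ring
  · intro i _ hi
    simp [mc, iteratedDeriv_fun_id_zero, hi]
  · simp

lemma mc_of_mul_deriv_eq_mul {F p : ℂ → ℂ} (hF : AnalyticAt ℂ F 0) (hp : AnalyticAt ℂ p 0)
    (hF0 : F 0 = 0) (hF1 : deriv F 0 = 1)
    (h : ∀ᶠ z in 𝓝 0, z * deriv F z = p z * F z) :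
    mc p 1 = mc F 2 ∧ mc p 2 = 2 * mc F 3 - mc F 2 ^ 2 := by
  have key (n : ℕ) : n * mc F n = ∑ i ∈ Finset.range (n + 1), mc p i * mc F (n - i) := by
    rw [← mc_id_mul_deriv hF, Filter.EventuallyEq.mc_eq h, mc_mul hp.contDiffAt hF.contDiffAt]
  have h0 : mc F 0 = 0 := by rw [mc_zero, hF0]
  have h1 : mc F 1 = 1 := by rw [mc_one, hF1]
  have k1 := key 1
  have k2 := key 2
  have k3 := key 3
  simp only [Finset.sum_range_succ, Finset.sum_range_zero, Nat.reduceSub, Nat.sub_zero, h0, h1,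
    Nat.cast_ofNat, Nat.cast_one] at k1 k2 k3
  constructor
  · linear_combination mc F 2 * k1 - k2
  · linear_combination mc F 3 * k1 - k3 - mc F 2 * (mc F 2 * k1 - k2)

lemma iteratedDeriv_succ_comp {f g : ℂ → ℂ} {x : ℂ} (hf : AnalyticAt ℂ f (g x))
    (hg : AnalyticAt ℂ g x) (n : ℕ) :
    iteratedDeriv (n + 1) (f ∘ g) x = ∑ i ∈ Finset.range (n + 1),
      n.choose i * iteratedDeriv i (deriv f ∘ g) x * iteratedDeriv (n - i + 1) g x := by
  have hchain : deriv (f ∘ g) =ᶠ[𝓝 x] fun y => (deriv f ∘ g) y * deriv g y := by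
    filter_upwards [hg.continuousAt.eventually hf.eventually_analyticAt,
      hg.eventually_analyticAt] with y hfy hgy
    exact deriv_comp y hfy.differentiableAt hgy.differentiableAt
  rw [iteratedDeriv_succ', hchain.iteratedDeriv_eq,
    iteratedDeriv_fun_mul (hf.deriv.comp hg).contDiffAt hg.deriv.contDiffAt]
  simp only [iteratedDeriv_succ']

lemma mc_of_comp_eq_id {f g : ℂ → ℂ} (hf : AnalyticAt ℂ f 0) (hg : AnalyticAt ℂ g 0)
    (hg0 : g 0 = 0) (hf1 : deriv f 0 = 1) (hfg : f ∘ g =ᶠ[𝓝 0] id) :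
    mc g 2 = -mc f 2 ∧ mc g 3 = 2 * mc f 2 ^ 2 - mc f 3 := by
  have hf' : AnalyticAt ℂ f (g 0) := by rwa [hg0]
  have e1 := iteratedDeriv_succ_comp hf' hg 0
  have e2 := iteratedDeriv_succ_comp hf' hg 1
  have e3 := iteratedDeriv_succ_comp hf' hg 2
  have d1 := iteratedDeriv_succ_comp hf'.deriv hg 0
  have d2 := iteratedDeriv_succ_comp hf'.deriv hg 1
  have dd1 := iteratedDeriv_succ_comp hf'.deriv.deriv hg 0
  rw [hfg.iteratedDeriv_eq] at e1 e2 e3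
  simp only [Finset.sum_range_succ, Finset.sum_range_zero, iteratedDeriv_id, iteratedDeriv_zero,
    iteratedDeriv_one, Function.comp_apply, hg0, hf1, Nat.choose_zero_right, Nat.choose_self,
    Nat.choose_succ_self_right, Nat.reduceAdd, Nat.reduceSub, Nat.sub_zero, Nat.sub_self,
    Nat.cast_one, Nat.cast_ofNat, reduceIte, OfNat.ofNat_ne_zero, OfNat.ofNat_ne_one, one_ne_zero,
    zero_add, one_mul, mul_one] at e1 e2 e3 d1 d2 dd1
  rw [d2, dd1, d1, ← e1] at e3
  rw [d1, ← e1] at e2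
  simp only [mc, iteratedDeriv_succ', iteratedDeriv_zero] at e2 e3 ⊢
  rw [Nat.factorial_two, show (3 : ℕ).factorial = 6 from rfl]
  constructor
  · linear_combination -e2 / 2
  · linear_combination -e3 / 6 + deriv (deriv f) 0 / 2 * e2

def kernelCoeff (n : ℕ) : ℂ := if n = 0 then 1 else 2 * (-1) ^ n

lemma norm_kernelCoeff_le (n : ℕ) : ‖kernelCoeff n‖ ≤ 2 := by
  unfold kernelCoeff
  split_ifs <;> norm_num

lemma hasSum_kernelCoeff {w : ℂ} (hw : ‖w‖ < 1) :
    HasSum (fun n => kernelCoeff n * w ^ n) ((1 - w) / (1 + w)) := by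
  have hw1 : 1 + w ≠ 0 := by
    intro h
    rw [eq_neg_of_add_eq_zero_right h, norm_neg, norm_one] at hw
    exact lt_irrefl 1 hw
  have hgeom : HasSum (fun n => (-w) ^ n) (1 + w)⁻¹ := by
    simpa using hasSum_geometric_of_norm_lt_one (ξ := -w) (by simpa using hw)
  have hcoeff : (fun n => 2 * (-w) ^ n - if n = 0 then 1 else 0) =
      fun n => kernelCoeff n * w ^ n := by
    ext n
    rcases eq_or_ne n 0 with rfl | hn
    · norm_num [kernelCoeff]
    · rw [kernelCoeff, if_neg hn, if_neg hn, sub_zero, neg_pow, mul_assoc]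
  have hsum : 2 * (1 + w)⁻¹ - 1 = (1 - w) / (1 + w) := by
    field_simp
    ring
  rw [← hcoeff, ← hsum]
  exact (hgeom.mul_left 2).sub (hasSum_ite_eq 0 (1 : ℂ))

lemma hasSum_pmKernel {z : ℂ} (hz : ‖z‖ < 1) (t : ℝ) :
    HasSum (fun n => kernelCoeff n * z ^ n * Complex.exp (t * Complex.I) ^ n) (pmKernel z t) := by
  have hw : ‖z * Complex.exp (t * Complex.I)‖ < 1 := by
    rwa [norm_mul, Complex.norm_exp_ofReal_mul_I, mul_one]
  simpa only [pmKernel, mul_pow, mul_assoc] using hasSum_kernelCoeff hw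

lemma hasSum_integral_pmKernel (μ : Measure ℝ) [IsFiniteMeasure μ] {z : ℂ}
    (hz : ‖z‖ < 1) :
    HasSum (fun n => kernelCoeff n * z ^ n * ∫ t, Complex.exp (t * Complex.I) ^ n ∂μ)
      (∫ t, pmKernel z t ∂μ) := by
  simp_rw [← integral_const_mul]
  refine hasSum_integral_of_dominated_convergence (fun n _ => 2 * ‖z‖ ^ n)
    (fun n => (by fun_prop : Continuous _).aestronglyMeasurable) (fun n => ?_)
    (ae_of_all _ fun _ => (summable_geometric_of_lt_one (norm_nonneg z) hz).mul_left 2)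
    (integrable_const _) (ae_of_all _ (hasSum_pmKernel hz))
  refine ae_of_all _ fun t => ?_
  rw [norm_mul, norm_mul, norm_pow, norm_pow, Complex.norm_exp_ofReal_mul_I, one_pow, mul_one]
  gcongr
  exact norm_kernelCoeff_le n

lemma norm_integral_exp_pow_le (μ : Measure ℝ) [IsFiniteMeasure μ] (n : ℕ) :
    ‖∫ t, Complex.exp (t * Complex.I) ^ n ∂μ‖ ≤ μ.real univ := by
  simpa using norm_integral_le_of_norm_le_const (μ := μ) (C := 1)
    (ae_of_all _ fun t => by rw [norm_pow, Complex.norm_exp_ofReal_mul_I, one_pow])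

lemma MemPm.norm_mc_le {m : ℝ} {q : ℂ → ℂ} (hq : MemPm m q) (n : ℕ) : ‖mc q n‖ ≤ m := by
  obtain ⟨-, -, μp, μn, _, _, -, hmass, hrep⟩ := hq
  set s := Icc 0 (2 * Real.pi)
  let moment (μ : Measure ℝ) (j : ℕ) : ℂ := ∫ t in s, Complex.exp (t * Complex.I) ^ j ∂μ
  have hexpand : ∀ᶠ z in 𝓝 0,
      HasSum (fun j => kernelCoeff j * (moment μp j - moment μn j) * z ^ j) (q z) := by
    filter_upwards [unitDisk_mem_nhds_zero] with z hz
    have hz' : ‖z‖ < 1 := by simpa [unitDisk] using hz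
    rw [hrep z hz]
    exact ((hasSum_integral_pmKernel (μp.restrict s) hz').sub
      (hasSum_integral_pmKernel (μn.restrict s) hz')).congr_fun fun j => by ring
  rw [mc_eq_of_hasSum hexpand]
  have hmoment (μ : Measure ℝ) [IsFiniteMeasure μ] : ‖moment μ n‖ ≤ (μ s).toReal := by
    simpa [Measure.real] using norm_integral_exp_pow_le (μ.restrict s) n
  calc ‖kernelCoeff n * (moment μp n - moment μn n)‖
      ≤ 2 * ((μp s).toReal + (μn s).toReal) := by
        rw [norm_mul]
        gcongr
        · exact norm_kernelCoeff_le n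
        · exact (norm_sub_le _ _).trans (add_le_add (hmoment μp) (hmoment μn))
    _ ≤ m := by linarith

lemma MemPm.analyticAt_zero {m : ℝ} {q : ℂ → ℂ} (hq : MemPm m q) : AnalyticAt ℂ q 0 :=
  hq.1 0 (mem_of_mem_nhds unitDisk_mem_nhds_zero)

lemma MemPmBeta.analyticAt_zero {m β : ℝ} {p : ℂ → ℂ} (hp : MemPmBeta m β p) :
    AnalyticAt ℂ p 0 := by
  obtain ⟨q, hq, hpq⟩ := hp
  have hq0 := hq.analyticAt_zero
  exact (by fun_prop : AnalyticAt ℂ (fun z => (β : ℂ) + (1 - β) * q z) 0).congr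
    (Filter.eventually_of_mem unitDisk_mem_nhds_zero fun z hz => (hpq z hz).symm)

lemma MemPmBeta.norm_mc_le {m β : ℝ} {p : ℂ → ℂ} (hp : MemPmBeta m β p) (hβ : β ≤ 1)
    {n : ℕ} (hn : n ≠ 0) : ‖mc p n‖ ≤ (1 - β) * m := by
  obtain ⟨q, hq, hpq⟩ := hp
  have hpq' : p =ᶠ[𝓝 0] fun z => (β : ℂ) + (1 - β) * q z :=
    Filter.eventually_of_mem unitDisk_mem_nhds_zero hpq
  have hmc : mc p n = (1 - β) * mc q n := by
    rw [hpq'.mc_eq, mc, mc, iteratedDeriv_const_add (Nat.pos_of_ne_zero hn),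
      iteratedDeriv_const_mul _ hq.analyticAt_zero.contDiffAt, mul_div_assoc]
  have hnorm : ‖(1 : ℂ) - β‖ = 1 - β := by
    rw [← Complex.ofReal_one, ← Complex.ofReal_sub, Complex.norm_real, Real.norm_of_nonneg]
    linarith
  rw [hmc, norm_mul, hnorm]
  exact mul_le_mul_of_nonneg_left (hq.norm_mc_le n) (by linarith)

lemma BiUnivalentPair.mc_inv {f g : ℂ → ℂ} (h : BiUnivalentPair f g) :
    mc g 2 = -mc f 2 ∧ mc g 3 = 2 * mc f 2 ^ 2 - mc f 3 := by
  obtain ⟨hf, -, hf1, -, hg, -, hg0, hfg⟩ := h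
  have h0 : (0 : ℂ) ∈ unitDisk := mem_of_mem_nhds unitDisk_mem_nhds_zero
  refine mc_of_comp_eq_id (hf 0 h0) (hg 0 h0) hg0 hf1 ?_
  filter_upwards [ball_mem_nhds (0 : ℂ) (by norm_num : (0 : ℝ) < 1 / 4)] with w hw
  exact hfg w (by simpa using hw)

lemma mul_deriv_eq_starOp_mul {F : ℂ → ℂ} (hF0 : F 0 = 0) {z : ℂ} (hz : z ≠ 0 → F z ≠ 0) :
    z * deriv F z = starOp F z * F z := by
  rcases eq_or_ne z 0 with rfl | hz0
  · simp [hF0]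
  · rw [starOp, if_neg hz0, div_mul_cancel₀ _ (hz hz0)]

lemma norm_mc_le_of_memPmBeta_starOp {m β : ℝ} {F : ℂ → ℂ} (hβ : β ≤ 1)
    (hF : AnalyticAt ℂ F 0) (hF0 : F 0 = 0) (hF1 : deriv F 0 = 1)
    (hnz : ∀ z ∈ unitDisk, z ≠ 0 → F z ≠ 0) (hp : MemPmBeta m β (starOp F)) :
    ‖mc F 2‖ ≤ (1 - β) * m ∧ ‖2 * mc F 3 - mc F 2 ^ 2‖ ≤ (1 - β) * m := by
  have hrel : ∀ᶠ z in 𝓝 0, z * deriv F z = starOp F z * F z := by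
    filter_upwards [unitDisk_mem_nhds_zero] with z hz
    exact mul_deriv_eq_starOp_mul hF0 (hnz z hz)
  obtain ⟨h1, h2⟩ := mc_of_mul_deriv_eq_mul hF hp.analyticAt_zero hF0 hF1 hrel
  rw [← h2, ← h1]
  exact ⟨hp.norm_mc_le hβ one_ne_zero, hp.norm_mc_le hβ two_ne_zero⟩

lemma eventually_hasSum_hadFun {f k : ℂ → ℂ}
    (hs : ∀ z ∈ unitDisk, Summable fun n => hadCoeff f k n * z ^ n) :
    ∀ᶠ z in 𝓝 0, HasSum (fun n => hadCoeff f k n * z ^ n) (hadFun f k z) :=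
  Filter.eventually_of_mem unitDisk_mem_nhds_zero fun z hz => (hs z hz).hasSum

lemma mc_hadFun {f k : ℂ → ℂ}
    (hs : ∀ z ∈ unitDisk, Summable fun n => hadCoeff f k n * z ^ n) :
    mc (hadFun f k) = hadCoeff f k :=
  mc_eq_of_hasSum (eventually_hasSum_hadFun hs)

lemma norm_hadCoeff_le_of_memPmBeta {m β : ℝ} {f k : ℂ → ℂ} (hβ : β ≤ 1)
    (hs : ∀ z ∈ unitDisk, Summable fun n => hadCoeff f k n * z ^ n)
    (hnz : ∀ z ∈ unitDisk, z ≠ 0 → hadFun f k z ≠ 0)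
    (hp : MemPmBeta m β (starOp (hadFun f k))) :
    ‖mc f 2 * mc k 2‖ ≤ (1 - β) * m ∧
      ‖2 * (mc f 3 * mc k 3) - (mc f 2 * mc k 2) ^ 2‖ ≤ (1 - β) * m := by
  have hF : AnalyticAt ℂ (hadFun f k) 0 :=
    (hasFPowerSeriesAt_ofScalars_of_hasSum (eventually_hasSum_hadFun hs)).analyticAt
  have hF0 : hadFun f k 0 = 0 := by
    rw [← mc_zero (hadFun f k), mc_hadFun hs, hadCoeff, if_pos rfl]
  have hF1 : deriv (hadFun f k) 0 = 1 := by
    rw [← mc_one, mc_hadFun hs]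
    rfl
  simpa [mc_hadFun hs, hadCoeff] using norm_mc_le_of_memPmBeta_starOp hβ hF hF0 hF1 hnz hp

theorem S_a2_bound_general (m β : ℝ) (hβ1 : β < 1)
    (k f g : ℂ → ℂ)
    (hk2 : mc k 2 ≠ 0)
    (hD : 2 * mc k 3 - mc k 2 ^ 2 ≠ 0)
    (hf : MemS m β k f g) :
    ‖mc f 2‖ ≤
      min (Real.sqrt (m * (1 - β) / ‖2 * mc k 3 - mc k 2 ^ 2‖))
        (m * (1 - β) / ‖mc k 2‖) := by
  obtain ⟨hbi, hsf, hsg, hnzf, hnzg, hpf, hpg⟩ := hf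
  obtain ⟨hb2, hb3⟩ := hbi.mc_inv
  obtain ⟨hF2, hF3⟩ := norm_hadCoeff_le_of_memPmBeta hβ1.le hsf hnzf hpf
  obtain ⟨-, hG3⟩ := norm_hadCoeff_le_of_memPmBeta hβ1.le hsg hnzg hpg
  rw [hb2, hb3] at hG3
  have hsum : ‖2 * mc f 2 ^ 2 * (2 * mc k 3 - mc k 2 ^ 2)‖ ≤ 2 * ((1 - β) * m) := by
    calc ‖2 * mc f 2 ^ 2 * (2 * mc k 3 - mc k 2 ^ 2)‖
        = ‖(2 * (mc f 3 * mc k 3) - (mc f 2 * mc k 2) ^ 2) +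
            (2 * ((2 * mc f 2 ^ 2 - mc f 3) * mc k 3) - (-mc f 2 * mc k 2) ^ 2)‖ := by
          congr 1
          ring
      _ ≤ 2 * ((1 - β) * m) := (norm_add_le _ _).trans (by linarith)
  rw [norm_mul, norm_mul, norm_pow, Complex.norm_ofNat] at hsum
  rw [norm_mul] at hF2
  refine le_min ?_ ?_
  · refine Real.le_sqrt_of_sq_le ((le_div_iff₀ (norm_pos_iff.mpr hD)).mpr ?_)
    linarith
  · rw [le_div_iff₀ (norm_pos_iff.mpr hk2)]
    linarith

/-- Corollary 2.3, bound for `|a₂|` in the class `S_m^k(β) = BV^k(m; 0, β)`. -/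
theorem S_a2_bound (m β : ℝ) (hm : 2 ≤ m) (hβ0 : 0 ≤ β) (hβ1 : β < 1)
    (k kinv f g : ℂ → ℂ) (hk : BiUnivalentPair k kinv)
    (hk2 : mc k 2 ≠ 0) (hk3 : mc k 3 ≠ 0)
    (hD : 2 * mc k 3 - mc k 2 ^ 2 ≠ 0)
    (hf : MemS m β k f g) :
    ‖mc f 2‖ ≤
      min (Real.sqrt (m * (1 - β) / ‖2 * mc k 3 - mc k 2 ^ 2‖))
        (m * (1 - β) / ‖mc k 2‖) :=
  S_a2_bound_general m β hβ1 k f g hk2 hD hf
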